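/- (Main theorem, unitary group part.) Let X be a countable set, G a connected simple graph on X with combinatorial graph distance d_G, and let v : X → H and the bounded nonnegative self-adjoint operator L on the complex Hilbert space H be a Laplacian based on G with respect to v. Fix x, y ∈ X, set d = d_G(x,y) and C(x,y) = (Re⟪v x, L^{d+1} (v x)⟫ + Re⟪v y, L^{d+1} (v y)⟫) / (2·(d+1)!). Then for all t ≥ 0: | |⟪v x, e^{−itL} (v y)⟫| − t^d · |⟪v x, L^d (v y)⟫| / d! | ≤ t^{d+1} · C(x,y). -/

import Mathlib

open scoped InnerProductSpace

section Aux

variable {H : Type*} [NormedAddCommGroup H] [InnerProductSpace ℂ H] [CompleteSpace H]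

private lemma inner_closure_span_zero {S : Set H} {c : H}
    (h : ∀ u ∈ S, ⟪u, c⟫_ℂ = 0) {w : H}
    (hw : w ∈ (Submodule.span ℂ S).topologicalClosure) : ⟪w, c⟫_ℂ = 0 := by
  have hle : Submodule.span ℂ S ≤ (ℂ ∙ c)ᗮ := by
    rw [Submodule.span_le]
    intro u hu
    exact Submodule.mem_orthogonal_singleton_iff_inner_left.mpr (h u hu)
  have h2 := (Submodule.span ℂ S).topologicalClosure_minimal hle
    (Submodule.isClosed_orthogonal (ℂ ∙ c))
  exact Submodule.mem_orthogonal_singleton_iff_inner_left.mp (h2 hw)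

private lemma sa_move {A : H →L[ℂ] H} (hA : IsSelfAdjoint A) (u w : H) :
    ⟪A u, w⟫_ℂ = ⟪u, A w⟫_ℂ := by
  conv_lhs => rw [← hA.adjoint_eq]
  exact ContinuousLinearMap.adjoint_inner_left A w u

private lemma semi_cs {A : H →L[ℂ] H} (hA : IsSelfAdjoint A)
    (hpos : ∀ f : H, 0 ≤ (⟪f, A f⟫_ℂ).re) (f g : H) :
    ‖⟪f, A g⟫_ℂ‖ ^ 2 ≤ (⟪f, A f⟫_ℂ).re * (⟪g, A g⟫_ℂ).re := by
  set p := ⟪f, A g⟫_ℂ with hp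
  by_cases hp0 : p = 0
  · rw [hp0]
    simpa using mul_nonneg (hpos f) (hpos g)
  have hN : 0 < Complex.normSq p := Complex.normSq_pos.mpr hp0
  have hgf : ⟪g, A f⟫_ℂ = (starRingEnd ℂ) p := by
    rw [← sa_move hA g f, hp, inner_conj_symm]
  have key : ∀ t : ℝ, 0 ≤ (⟪f, A f⟫_ℂ).re + 2 * t * Complex.normSq p
      + t ^ 2 * Complex.normSq p * (⟪g, A g⟫_ℂ).re := by
    intro t
    have h0 := hpos (f + ((t : ℂ) * (starRingEnd ℂ) p) • g)
    have e : ⟪f + ((t:ℂ) * (starRingEnd ℂ) p) • g,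
          A (f + ((t:ℂ) * (starRingEnd ℂ) p) • g)⟫_ℂ
        = ⟪f, A f⟫_ℂ + (((2 * t * Complex.normSq p : ℝ) : ℂ))
          + (((t^2 * Complex.normSq p : ℝ) : ℂ)) * ⟪g, A g⟫_ℂ := by
      simp only [map_add, map_smul, inner_add_left, inner_add_right, inner_smul_left,
        inner_smul_right, hgf, ← hp, map_mul, Complex.conj_ofReal, Complex.conj_conj,
        Complex.ofReal_mul, Complex.ofReal_pow, Complex.ofReal_ofNat, ← Complex.mul_conj]
      ring
    rw [e] at h0
    simp only [Complex.add_re, Complex.re_ofReal_mul, Complex.ofReal_re] at h0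
    linarith [h0]
  have hα := hpos f
  have hβ := hpos g
  have hnormsq : ‖p‖ ^ 2 = Complex.normSq p := by
    rw [Complex.sq_norm]
  rcases eq_or_lt_of_le hβ with hβ0 | hβpos
  · exfalso
    set t0 : ℝ := -(((⟪f, A f⟫_ℂ).re + 1) / (2 * Complex.normSq p)) with ht0def
    have hk := key t0
    rw [← hβ0] at hk
    have ht0 : 2 * t0 * Complex.normSq p = -((⟪f, A f⟫_ℂ).re + 1) := by
      rw [ht0def]
      field_simp
    nlinarith [hk, ht0]
  · have hk := key (-(1 / (⟪g, A g⟫_ℂ).re))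
    have h3 := mul_nonneg hk hβpos.le
    have h4 : ((⟪f, A f⟫_ℂ).re + 2 * (-(1 / (⟪g, A g⟫_ℂ).re)) * Complex.normSq p
        + (-(1 / (⟪g, A g⟫_ℂ).re)) ^ 2 * Complex.normSq p * (⟪g, A g⟫_ℂ).re)
          * (⟪g, A g⟫_ℂ).re
        = (⟪f, A f⟫_ℂ).re * (⟪g, A g⟫_ℂ).re - Complex.normSq p := by
      field_simp
      ring
    rw [h4] at h3
    rw [hnormsq]
    linarith

end Aux

section Lap

variable {X : Type*} (G : SimpleGraph X)
variable {H : Type*} [NormedAddCommGroup H] [InnerProductSpace ℂ H] [CompleteSpace H]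
variable (v : X → H) (L : H →L[ℂ] H)

private lemma pow_inner_nonneg (hL : IsSelfAdjoint L)
    (hpos : ∀ f : H, 0 ≤ (⟪f, L f⟫_ℂ).re) (n : ℕ) (f : H) :
    0 ≤ (⟪f, (L ^ n) f⟫_ℂ).re := by
  rcases Nat.even_or_odd n with ⟨k, hk⟩ | ⟨k, hk⟩
  · subst hk
    have e : ⟪f, (L ^ (k + k)) f⟫_ℂ = ⟪(L ^ k) f, (L ^ k) f⟫_ℂ := by
      rw [pow_add, ContinuousLinearMap.mul_apply]
      exact (sa_move (hL.pow k) f _).symm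
    rw [e]
    have hss : 0 ≤ RCLike.re ⟪(L ^ k) f, (L ^ k) f⟫_ℂ := inner_self_nonneg
    simpa [RCLike.re_to_complex] using hss
  · subst hk
    have hsplit : (2 * k + 1) = k + (1 + k) := by omega
    have e : ⟪f, (L ^ (2 * k + 1)) f⟫_ℂ = ⟪(L ^ k) f, L ((L ^ k) f)⟫_ℂ := by
      rw [hsplit, pow_add, pow_add, pow_one, ContinuousLinearMap.mul_apply,
        ContinuousLinearMap.mul_apply]
      exact (sa_move (hL.pow k) f _).symm
    rw [e]
    exact hpos _

private lemma laplacian_locality (hG : G.Connected)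
    (horth : ∀ x y : X, x ≠ y → ⟪v x, v y⟫_ℂ = 0)
    (hdense : Dense ((Submodule.span ℂ (Set.range v) : Submodule ℂ H) : Set H))
    (hL : IsSelfAdjoint L)
    (hlap : ∀ x y : X, x ≠ y →
      (⟪v x, L (v y)⟫_ℂ).im = 0 ∧ (⟪v x, L (v y)⟫_ℂ).re ≤ 0 ∧
        ((⟪v x, L (v y)⟫_ℂ).re < 0 ↔ G.Adj x y)) :
    ∀ (n : ℕ) (x y : X), n < G.dist x y → ⟪v x, (L ^ n) (v y)⟫_ℂ = 0 := by
  -- key sublemma : L (v x) lives in the closed span of the `v z`, `z` in the closed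
  -- neighbourhood of `x`.
  have hLv : ∀ x : X,
      L (v x) ∈ (Submodule.span ℂ (v '' {z | z = x ∨ G.Adj x z})).topologicalClosure := by
    intro x
    set K := (Submodule.span ℂ (v '' {z | z = x ∨ G.Adj x z})).topologicalClosure with hK
    haveI : CompleteSpace K :=
      (Submodule.isClosed_topologicalClosure _).completeSpace_coe
    set q : H := L (v x) - (K.orthogonalProjection (L (v x)) : H) with hq
    have hqmem : q ∈ Kᗮ := K.sub_starProjection_mem_orthogonal _
    have hzero : ∀ u ∈ Set.range v, ⟪u, q⟫_ℂ = 0 := by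
      rintro _ ⟨z, rfl⟩
      by_cases hz : z = x ∨ G.Adj x z
      · have hvz : v z ∈ K := by
          apply (Submodule.span ℂ (v '' {z | z = x ∨ G.Adj x z})).le_topologicalClosure
          exact Submodule.subset_span ⟨z, hz, rfl⟩
        exact hqmem (v z) hvz
      · push_neg at hz
        obtain ⟨hzx, hznadj⟩ := hz
        have h1 : ⟪v z, L (v x)⟫_ℂ = 0 := by
          obtain ⟨him, hre, hiff⟩ := hlap z x hzx
          have hnadj : ¬ G.Adj z x := fun h => hznadj (h.symm)
          have : (⟪v z, L (v x)⟫_ℂ).re = 0 :=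
            le_antisymm hre (not_lt.mp (fun h => hnadj (hiff.mp h)))
          exact Complex.ext this him
        have h2 : ⟪v z, ((K.orthogonalProjection (L (v x)) : H))⟫_ℂ = 0 := by
          rw [inner_eq_zero_symm]
          refine inner_closure_span_zero ?_ (SetLike.coe_mem (K.orthogonalProjection (L (v x))))
          rintro _ ⟨z', hz', rfl⟩
          have hne : z' ≠ z := by
            rintro rfl
            exact (by push_neg; exact ⟨hzx, hznadj⟩ : ¬(z' = x ∨ G.Adj x z')) hz'
          exact horth z' z hne
        rw [hq, inner_sub_right, h1, h2, sub_zero]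
    have hq0 : q = 0 := by
      have htop : (Submodule.span ℂ (Set.range v)).topologicalClosure = ⊤ :=
        Submodule.dense_iff_topologicalClosure_eq_top.mp hdense
      have : ⟪q, q⟫_ℂ = 0 :=
        inner_closure_span_zero hzero (by rw [htop]; trivial)
      exact inner_self_eq_zero.mp this
    have h5 : L (v x) = (K.orthogonalProjection (L (v x)) : H) := by
      have h6 := hq0
      rw [hq] at h6
      exact sub_eq_zero.mp h6
    rw [h5]
    exact SetLike.coe_mem _
  intro n
  induction n with
  | zero =>
    intro x y h
    simp only [pow_zero, ContinuousLinearMap.one_apply]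
    refine horth x y ?_
    rintro rfl
    simp [SimpleGraph.dist_self] at h
  | succ n ih =>
    intro x y h
    have h1 : ⟪v x, (L ^ (n + 1)) (v y)⟫_ℂ = ⟪L (v x), (L ^ n) (v y)⟫_ℂ := by
      rw [pow_succ', ContinuousLinearMap.mul_apply]
      exact (sa_move hL (v x) _).symm
    rw [h1]
    refine inner_closure_span_zero ?_ (hLv x)
    rintro _ ⟨z, hz, rfl⟩
    refine ih z y ?_
    have htri : G.dist x y ≤ G.dist x z + G.dist z y := hG.dist_triangle
    have hxz : G.dist x z ≤ 1 := by
      rcases hz with rfl | hadj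
      · simp [SimpleGraph.dist_self]
      · exact le_of_eq (SimpleGraph.dist_eq_one_iff_adj.mpr hadj)
    omega

end Lap

set_option maxHeartbeats 1000000 in
set_option synthInstance.maxHeartbeats 400000 in
/-- **Main theorem, unitary group part.** Let `G` be a connected simple graph on a
countable set `X`, `v : X → H` a family of nonzero pairwise orthogonal vectors with dense
span in the complex Hilbert space `H`, and `L` a bounded nonnegative selfadjoint operator
which is a Laplacian based on `G` with respect to `v`. With `d = d_G(x,y)` and
`C(x,y) = (Re⟪v x, L^{d+1} v x⟫ + Re⟪v y, L^{d+1} v y⟫)/(2 (d+1)!)` one has, for all `t ≥ 0`,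
`| |⟪v x, e^{−itL} v y⟫| − t^d |⟪v x, L^d v y⟫| / d! | ≤ t^{d+1} C(x,y)`. -/
theorem main_theorem_unitary_group
    {X : Type*} [Countable X] (G : SimpleGraph X) (hG : G.Connected)
    {H : Type*} [NormedAddCommGroup H] [InnerProductSpace ℂ H] [CompleteSpace H]
    (v : X → H) (hv : ∀ x, v x ≠ 0)
    (horth : ∀ x y : X, x ≠ y → ⟪v x, v y⟫_ℂ = 0)
    (hdense : Dense ((Submodule.span ℂ (Set.range v) : Submodule ℂ H) : Set H))
    (L : H →L[ℂ] H) (hL : IsSelfAdjoint L)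
    (hpos : ∀ f : H, 0 ≤ (⟪f, L f⟫_ℂ).re)
    (hlap : ∀ x y : X, x ≠ y →
      (⟪v x, L (v y)⟫_ℂ).im = 0 ∧ (⟪v x, L (v y)⟫_ℂ).re ≤ 0 ∧
        ((⟪v x, L (v y)⟫_ℂ).re < 0 ↔ G.Adj x y))
    (x y : X) :
    ∀ t : ℝ, 0 ≤ t →
      |‖⟪v x, (NormedSpace.exp ((-(Complex.I * (t : ℂ))) • L)) (v y)⟫_ℂ‖ -
          t ^ (G.dist x y) * ‖⟪v x, (L ^ (G.dist x y)) (v y)⟫_ℂ‖ /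
            ((G.dist x y).factorial : ℝ)| ≤
        t ^ (G.dist x y + 1) *
          (((⟪v x, (L ^ (G.dist x y + 1)) (v x)⟫_ℂ).re +
            (⟪v y, (L ^ (G.dist x y + 1)) (v y)⟫_ℂ).re) /
            (2 * ((G.dist x y + 1).factorial : ℝ))) := by
  intro t ht
  set d := G.dist x y with hd
  set a : H →L[ℂ] H := (-Complex.I) • L with ha
  set U : ℝ → (H →L[ℂ] H) := fun s => NormedSpace.exp (s • a) with hUdef
  have hUderiv : ∀ s : ℝ, HasDerivAt U (U s * a) s := fun s =>
    hasDerivAt_exp_smul_const (𝕂 := ℝ) a s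
  set c : ℕ → ℝ → ℂ := fun n s => ⟪v x, (U s) ((a ^ n) (v y))⟫_ℂ with hcdef
  have hcderiv : ∀ (n : ℕ) (s : ℝ), HasDerivAt (c n) (c (n + 1) s) s := by
    intro n s
    have h1 : HasDerivAt (fun s : ℝ => (U s) ((a ^ n) (v y))) ((U s * a) ((a ^ n) (v y))) s :=
      (((ContinuousLinearMap.apply ℂ H ((a ^ n) (v y))).restrictScalars
        ℝ).hasFDerivAt.comp_hasDerivAt s (hUderiv s))
    have h3 := (((innerSL ℂ (v x)).restrictScalars ℝ).hasFDerivAt.comp_hasDerivAt s h1)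
    have h4 : c (n + 1) s = ⟪v x, (U s * a) ((a ^ n) (v y))⟫_ℂ := by
      simp only [hcdef, ContinuousLinearMap.mul_apply]
      rw [pow_succ', ContinuousLinearMap.mul_apply]
    rw [show HasDerivAt (c n) (c (n + 1) s) s ↔
      HasDerivAt (c n) (⟪v x, (U s * a) ((a ^ n) (v y))⟫_ℂ) s from by rw [h4]]
    exact h3
  have hgsum : ∀ (k : ℕ) (s : ℝ),
      HasDerivAt (fun s : ℝ => ∑ n ∈ Finset.range (k + 1),
          ((t - s) ^ n / (n.factorial : ℝ)) • c n s)
        (((t - s) ^ k / (k.factorial : ℝ)) • c (k + 1) s) s := by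
    intro k
    induction k with
    | zero =>
      intro s
      simpa using hcderiv 0 s
    | succ k ih =>
      intro s
      have hfacpos : (0:ℝ) < (k.factorial : ℝ) := by
        exact_mod_cast k.factorial_pos
      have hterm := ((((hasDerivAt_id s).const_sub t).pow (k+1)).div_const
        (((k+1).factorial : ℝ))).smul (hcderiv (k+1) s)
      have hsum := (ih s).add hterm
      have hfun : (fun s : ℝ => ∑ n ∈ Finset.range (k + 1 + 1),
            ((t - s) ^ n / (n.factorial : ℝ)) • c n s)
          = fun s : ℝ => (∑ n ∈ Finset.range (k + 1),
              ((t - s) ^ n / (n.factorial : ℝ)) • c n s)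
            + ((t - s) ^ (k+1) / (((k+1).factorial : ℝ))) • c (k+1) s := by
        funext s; rw [Finset.sum_range_succ]
      rw [hfun]
      refine hsum.congr_deriv (Eq.symm ?_)
      simp only [id_eq, Nat.add_sub_cancel, Pi.pow_apply]
      have hfac : (((k+1).factorial : ℝ)) = ((k:ℝ)+1) * (k.factorial : ℝ) := by
        push_cast [Nat.factorial_succ]; ring
      rw [show ((((k+1 : ℕ) : ℝ)) * (t - s) ^ k * -1 / (((k+1).factorial : ℝ)))
          = -((t - s) ^ k / (k.factorial : ℝ)) from by
        rw [hfac]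
        push_cast
        field_simp]
      rw [neg_smul]
      abel
  -- positivity of matrix elements of powers
  set bx := (⟪v x, (L ^ (d + 1)) (v x)⟫_ℂ).re with hbx
  set by' := (⟪v y, (L ^ (d + 1)) (v y)⟫_ℂ).re with hby
  have hbxnn : 0 ≤ bx := pow_inner_nonneg L hL hpos (d+1) (v x)
  have hbynn : 0 ≤ by' := pow_inner_nonneg L hL hpos (d+1) (v y)
  set M := (bx + by') / 2 with hM
  have hMnn : 0 ≤ M := by positivity
  -- commutation and unitarity facts
  have hcommL : ∀ s : ℝ, Commute ((L : H →L[ℂ] H) ^ (d+1)) (s • a) := by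
    intro s
    rw [ha]
    exact (((Commute.refl L).pow_left (d+1)).smul_right (-Complex.I)).smul_right s
  have hcomm : ∀ s : ℝ, (L ^ (d+1)) * U s = U s * (L ^ (d+1)) := by
    intro s
    exact ((hcommL s).exp_right)
  have hadj : ∀ s : ℝ,
      ContinuousLinearMap.adjoint (U s) * (L ^ (d+1)) * U s = L ^ (d+1) := by
    intro s
    have hstar : ContinuousLinearMap.adjoint (U s) = NormedSpace.exp (-(s • a)) := by
      rw [← ContinuousLinearMap.star_eq_adjoint, hUdef]
      rw [NormedSpace.star_exp]
      congr 1
      rw [star_smul, star_trivial, ha, star_smul, hL.star_eq]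
      rw [← smul_neg, ← neg_smul, neg_neg]
      congr 1
      simp [Complex.star_def]
    rw [hstar]
    have h2 : Commute ((L : H →L[ℂ] H) ^ (d+1)) (-(s • a)) := (hcommL s).neg_right
    let +nondep : NormedAlgebra ℚ (H →L[ℂ] H) := .restrictScalars ℚ ℂ (H →L[ℂ] H)
    rw [← (h2.exp_right).eq, mul_assoc,
      ← NormedSpace.exp_add_of_commute ((Commute.refl (s • a)).neg_left),
      neg_add_cancel, NormedSpace.exp_zero, mul_one]
  have hinner_conserve : ∀ s : ℝ,
      ⟪U s (v y), (L ^ (d+1)) (U s (v y))⟫_ℂ = ⟪v y, (L ^ (d+1)) (v y)⟫_ℂ := by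
    intro s
    rw [← ContinuousLinearMap.adjoint_inner_right (U s)]
    have h5 : (ContinuousLinearMap.adjoint (U s)) ((L ^ (d+1)) (U s (v y)))
        = (L ^ (d+1)) (v y) := by
      have h6 := congrArg (fun (B : H →L[ℂ] H) => B (v y)) (hadj s)
      simpa [ContinuousLinearMap.mul_apply] using h6
    rw [h5]
  -- the uniform bound on the top coefficient
  have hbound : ∀ s : ℝ, ‖c (d+1) s‖ ≤ M := by
    intro s
    have h1 : (a ^ (d+1)) (v y) = ((-Complex.I) ^ (d+1)) • ((L ^ (d+1)) (v y)) := by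
      rw [ha, smul_pow, ContinuousLinearMap.smul_apply]
    have hUsw : U s ((L ^ (d+1)) (v y)) = (L ^ (d+1)) (U s (v y)) := by
      have h6 := congrArg (fun (B : H →L[ℂ] H) => B (v y)) (hcomm s)
      simpa [ContinuousLinearMap.mul_apply] using h6.symm
    have h2 : c (d+1) s = ((-Complex.I) ^ (d+1)) * ⟪v x, (L ^ (d+1)) (U s (v y))⟫_ℂ := by
      simp only [hcdef]
      rw [h1, map_smul, inner_smul_right, hUsw]
    have h3 : ‖c (d+1) s‖ = ‖⟪v x, (L ^ (d+1)) (U s (v y))⟫_ℂ‖ := by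
      rw [h2, norm_mul, norm_pow]
      simp
    have h4 := semi_cs (hL.pow (d+1)) (fun f => pow_inner_nonneg L hL hpos (d+1) f)
      (v x) (U s (v y))
    rw [hinner_conserve s] at h4
    rw [h3, hM]
    nlinarith [h4, norm_nonneg ⟪v x, (L ^ (d+1)) (U s (v y))⟫_ℂ, sq_nonneg (bx - by'),
      hbxnn, hbynn]
  set g : ℝ → ℂ := fun s => ∑ n ∈ Finset.range (d + 1),
    ((t - s) ^ n / (n.factorial : ℝ)) • c n s with hgdef
  have hfacd : (((d+1).factorial : ℝ)) = ((d:ℝ)+1) * (d.factorial : ℝ) := by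
    push_cast [Nat.factorial_succ]; ring
  have hfacdpos : (0:ℝ) < (d.factorial : ℝ) := by exact_mod_cast d.factorial_pos
  have hkey : ‖g t - g 0‖ ≤ M / ((d+1).factorial : ℝ) * t ^ (d+1) := by
    have hBderiv : ∀ s : ℝ, HasDerivAt
        (fun s : ℝ => M / ((d+1).factorial : ℝ) * (t ^ (d+1) - (t - s) ^ (d+1)))
        (M / ((d+1).factorial : ℝ) * (((d:ℝ)+1) * (t - s) ^ d)) s := by
      intro s
      have h1 := ((((hasDerivAt_id s).const_sub t).pow (d+1)).const_sub
        (t ^ (d+1))).const_mul (M / ((d+1).factorial : ℝ))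
      refine h1.congr_deriv (Eq.symm ?_)
      simp only [id_eq, Nat.add_sub_cancel, Pi.pow_apply]
      push_cast
      ring
    have hfderiv : ∀ s ∈ Set.Ico (0:ℝ) t, HasDerivWithinAt (fun s => g s - g 0)
        (((t - s) ^ d / (d.factorial : ℝ)) • c (d + 1) s) (Set.Ici s) s := by
      intro s _
      exact ((hgsum d s).sub_const (g 0)).hasDerivWithinAt
    have hcont : ContinuousOn (fun s => g s - g 0) (Set.Icc 0 t) := by
      intro s _
      exact (((hgsum d s).sub_const (g 0)).continuousAt).continuousWithinAt
    have hbound2 : ∀ s ∈ Set.Ico (0:ℝ) t,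
        ‖((t - s) ^ d / (d.factorial : ℝ)) • c (d + 1) s‖
          ≤ M / ((d+1).factorial : ℝ) * (((d:ℝ)+1) * (t - s) ^ d) := by
      intro s hs
      have hts : (0:ℝ) ≤ t - s := by linarith [hs.2]
      rw [norm_smul, Real.norm_eq_abs, abs_of_nonneg (by positivity)]
      calc ((t - s) ^ d / (d.factorial : ℝ)) * ‖c (d+1) s‖
          ≤ ((t - s) ^ d / (d.factorial : ℝ)) * M :=
            mul_le_mul_of_nonneg_left (hbound s) (by positivity)
        _ = M / ((d+1).factorial : ℝ) * (((d:ℝ)+1) * (t - s) ^ d) := by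
            rw [hfacd]
            field_simp
    have h9 := image_norm_le_of_norm_deriv_right_le_deriv_boundary hcont hfderiv
      (by simp) hBderiv hbound2
    have h10 := h9 (Set.right_mem_Icc.mpr ht)
    simpa using h10
  -- identification of the endpoints
  have hop : (-(Complex.I * (t : ℂ))) • L = t • a := by
    rw [ha, smul_comm, ← algebraMap_smul ℂ (t : ℝ) L, Complex.coe_algebraMap,
      smul_smul, neg_mul, mul_comm]
  have hgt : g t = ⟪v x, (NormedSpace.exp ((-(Complex.I * (t : ℂ))) • L)) (v y)⟫_ℂ := by
    have hexp : NormedSpace.exp ((-(Complex.I * (t : ℂ))) • L) = U t := by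
      rw [hop, hUdef]
    have hsum1 : g t = c 0 t := by
      simp only [hgdef]
      rw [Finset.sum_eq_single 0]
      · simp
      · intro n _ hn
        simp [sub_self, zero_pow hn]
      · intro h; exact absurd (Finset.mem_range.mpr (Nat.succ_pos d)) h
    rw [hsum1, hexp]
    simp only [hcdef, pow_zero, ContinuousLinearMap.one_apply]
  have hU0 : U 0 = 1 := by
    rw [hUdef]
    simp [NormedSpace.exp_zero]
  have hcn0 : ∀ n, c n 0 = ((-Complex.I) ^ n) * ⟪v x, (L ^ n) (v y)⟫_ℂ := by
    intro n
    simp only [hcdef, hU0, ContinuousLinearMap.one_apply, ha, smul_pow,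
      ContinuousLinearMap.smul_apply, inner_smul_right]
  have hloc := laplacian_locality G v L hG horth hdense hL hlap
  have hg0 : g 0 = ((t ^ d / (d.factorial : ℝ))) •
      (((-Complex.I) ^ d) * ⟪v x, (L ^ d) (v y)⟫_ℂ) := by
    simp only [hgdef]
    rw [Finset.sum_eq_single d]
    · rw [hcn0, sub_zero]
    · intro n hn hnd
      have hn' : n < d := by
        have := Finset.mem_range.mp hn; omega
      rw [hcn0, hloc n x y (by rw [← hd]; exact hn')]
      simp
    · intro h; exact absurd (Finset.mem_range.mpr (Nat.lt_succ_self d)) h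
  have hg0norm : ‖g 0‖ = t ^ d * ‖⟪v x, (L ^ d) (v y)⟫_ℂ‖ / (d.factorial : ℝ) := by
    rw [hg0, norm_smul, Real.norm_eq_abs, abs_of_nonneg (by positivity), norm_mul, norm_pow]
    simp only [norm_neg, Complex.norm_I, one_pow, one_mul]
    ring
  rw [← hgt, ← hg0norm]
  calc |‖g t‖ - ‖g 0‖| ≤ ‖g t - g 0‖ := abs_norm_sub_norm_le _ _
    _ ≤ M / ((d+1).factorial : ℝ) * t ^ (d+1) := hkey
    _ = t ^ (d + 1) * ((bx + by') / (2 * ((d+1).factorial : ℝ))) := by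
        rw [hM]; ring
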